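/- Let L be the Laplacian of an undirected connected graph on N vertices and let x : [0,∞) → ℝ^N solve ẋ(t) = −L·x(t). Then x(t) converges as t → ∞ to the average consensus vector ( (1/N)·Σᵢ xᵢ(0) )·1_N, and the quantity 1_Nᵀ x(t) is constant in time. -/

import Mathlib

/-!
The ODE conserves `1ᵀ x`, because `1ᵀ L = (L 1)ᵀ = 0`; hence `y = x - (average) • 1` stays in
the hyperplane `1ᗮ`. On that hyperplane `L` has a spectral gap `a > 0` (it is positive
semidefinite with kernel `span 1`, and the unit sphere is compact), so `|y|²` has derivative
`-2 yᵀ L y ≤ -2a |y|²` and decays like `e^{-2at}` by Grönwall.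
-/

open Matrix Filter Topology Real

theorem exists_pos_mul_norm_sq_le_of_pos {E : Type*} [NormedAddCommGroup E] [NormedSpace ℝ E]
    [FiniteDimensional ℝ E] {q : E → ℝ} (hq : Continuous q)
    (hsmul : ∀ (r : ℝ) (v : E), q (r • v) = r ^ 2 * q v) (hpos : ∀ v, v ≠ 0 → 0 < q v) :
    ∃ c, 0 < c ∧ ∀ v, c * ‖v‖ ^ 2 ≤ q v := by
  have hq0 : q 0 = 0 := by simpa using hsmul 0 0
  rcases subsingleton_or_nontrivial E with _ | _
  · exact ⟨1, one_pos, fun v => by simp [Subsingleton.elim v 0, hq0]⟩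
  obtain ⟨u, hu, hmin⟩ := (isCompact_sphere (0 : E) 1).exists_isMinOn
    (NormedSpace.sphere_nonempty.2 zero_le_one) hq.continuousOn
  have hu0 : u ≠ 0 := ne_zero_of_mem_sphere one_ne_zero ⟨u, hu⟩
  refine ⟨q u, hpos u hu0, fun v => ?_⟩
  rcases eq_or_ne v 0 with rfl | hv
  · simp [hq0]
  have hv' : 0 < ‖v‖ := norm_pos_iff.2 hv
  have hmem : ‖v‖⁻¹ • v ∈ Metric.sphere (0 : E) 1 := by
    simp [norm_smul, hv'.ne']
  calc q u * ‖v‖ ^ 2 ≤ q (‖v‖⁻¹ • v) * ‖v‖ ^ 2 := by gcongr; exact hmin hmem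
    _ = q v := by rw [hsmul]; field_simp

theorem le_mul_exp_of_hasDerivAt_le_mul {g g' : ℝ → ℝ} {K : ℝ} (hg : ∀ t, HasDerivAt g (g' t) t)
    (hle : ∀ t, g' t ≤ K * g t) {t : ℝ} (ht : 0 ≤ t) : g t ≤ g 0 * exp (K * t) := by
  have := le_gronwallBound_of_liminf_deriv_right_le (f' := g') (δ := g 0) (K := K) (ε := 0)
    (a := 0) (b := t) (fun s _ => (hg s).continuousAt.continuousWithinAt)
    (fun s _ r hr => (hg s).hasDerivWithinAt.liminf_right_slope_le hr) le_rfl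
    (fun s _ => by simpa using hle s) t ⟨ht, le_rfl⟩
  rwa [sub_zero, gronwallBound_ε0] at this

section

variable {ι : Type*} [Fintype ι]

theorem EuclideanSpace.norm_toLp_sq (v : ι → ℝ) : ‖WithLp.toLp 2 v‖ ^ 2 = v ⬝ᵥ v := by
  rw [← real_inner_self_eq_norm_sq, EuclideanSpace.inner_toLp_toLp]; rfl

theorem Matrix.PosSemidef.exists_pos_mul_dotProduct_self_le {L : Matrix ι ι ℝ}
    (hL : L.PosSemidef) (hker : ∀ v, L *ᵥ v = 0 → ∃ c, v = fun _ => c) :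
    ∃ a, 0 < a ∧ ∀ v, ∑ i, v i = 0 → a * (v ⬝ᵥ v) ≤ v ⬝ᵥ L *ᵥ v := by
  -- adding `(∑ i, v i) ^ 2` makes the form positive definite and leaves it unchanged on `1ᗮ`
  let q : (ι → ℝ) → ℝ := fun v => v ⬝ᵥ L *ᵥ v + (∑ i, v i) ^ 2
  have hL_nonneg : ∀ v, 0 ≤ v ⬝ᵥ L *ᵥ v := by simpa using hL.dotProduct_mulVec_nonneg
  have hpos : ∀ v, v ≠ 0 → 0 < q v := by
    intro v hv
    by_contra! hle
    have hLv : L *ᵥ v = 0 := by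
      rw [← hL.dotProduct_mulVec_zero_iff, star_trivial]
      nlinarith [hL_nonneg v, sq_nonneg (∑ i, v i)]
    obtain ⟨c, rfl⟩ := hker _ hLv
    refine hv (funext fun i => ?_)
    have hcard : (Fintype.card ι : ℝ) ≠ 0 := Nat.cast_ne_zero.2 (Fintype.card_pos_iff.2 ⟨i⟩).ne'
    simp only [q, hLv, dotProduct_zero, zero_add, Finset.sum_const, Finset.card_univ,
      nsmul_eq_mul] at hle
    simpa [hcard] using pow_eq_zero_iff (n := 2) two_ne_zero |>.1 (le_antisymm hle (sq_nonneg _))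
  obtain ⟨a, ha, hqa⟩ := exists_pos_mul_norm_sq_le_of_pos (E := EuclideanSpace ℝ ι)
    (q := fun u => q (WithLp.ofLp u)) (by fun_prop)
    (fun r u => by
      simp only [q, WithLp.ofLp_smul, mulVec_smul, dotProduct_smul, smul_dotProduct, smul_eq_mul,
        Pi.smul_apply, ← Finset.mul_sum]
      ring)
    (fun u hu => hpos _ (by simpa using hu))
  refine ⟨a, ha, fun v hv => ?_⟩
  simpa [q, hv, EuclideanSpace.norm_toLp_sq] using hqa (WithLp.toLp 2 v)

theorem Matrix.sum_mulVec_eq_zero {L : Matrix ι ι ℝ} (hL : L.IsSymm) (h1 : L *ᵥ 1 = 0)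
    (w : ι → ℝ) : ∑ i, (L *ᵥ w) i = 0 := by
  rw [← one_dotProduct, dotProduct_mulVec, ← mulVec_transpose, hL, h1, zero_dotProduct]

theorem HasDerivAt.dotProduct {y z : ℝ → ι → ℝ} {y' z' : ι → ℝ} {t : ℝ}
    (hy : HasDerivAt y y' t) (hz : HasDerivAt z z' t) :
    HasDerivAt (fun s => y s ⬝ᵥ z s) (y' ⬝ᵥ z t + y t ⬝ᵥ z') t :=
  (HasDerivAt.fun_sum (u := Finset.univ) fun i _ =>
    (hasDerivAt_pi.1 hy i).fun_mul (hasDerivAt_pi.1 hz i)).congr_deriv Finset.sum_add_distrib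

theorem sum_apply_eq_of_hasDerivAt {x x' : ℝ → ι → ℝ} (hx : ∀ t, HasDerivAt x (x' t) t)
    (hx' : ∀ t, ∑ i, x' t i = 0) (s t : ℝ) : ∑ i, x s i = ∑ i, x t i := by
  have hsum : ∀ t, HasDerivAt (fun s => ∑ i, x s i) 0 t := fun t => by
    simpa [hx' t] using HasDerivAt.fun_sum (u := Finset.univ) fun i _ => hasDerivAt_pi.1 (hx t) i
  exact is_const_of_deriv_eq_zero (fun t => (hsum t).differentiableAt) (fun t => (hsum t).deriv) s t

theorem tendsto_zero_of_dotProduct_self {α : Type*} {l : Filter α} {y : α → ι → ℝ}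
    (h : Tendsto (fun t => y t ⬝ᵥ y t) l (𝓝 0)) : Tendsto y l (𝓝 0) := by
  have hnorm : Tendsto (fun t => ‖WithLp.toLp 2 (y t)‖) l (𝓝 0) := by
    simpa [← EuclideanSpace.norm_toLp_sq] using h.sqrt
  simpa [Function.comp_def] using
    ((PiLp.continuous_ofLp 2 _).tendsto 0).comp (tendsto_zero_iff_norm_tendsto_zero.2 hnorm)

theorem tendsto_zero_of_hasDerivAt_neg_mulVec {L : Matrix ι ι ℝ} {a : ℝ} (ha : 0 < a) {y : ℝ → ι → ℝ} (hy : ∀ t, HasDerivAt y (-(L *ᵥ y t)) t)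
    (hgap : ∀ t, a * (y t ⬝ᵥ y t) ≤ y t ⬝ᵥ L *ᵥ y t) : Tendsto y atTop (𝓝 0) := by
  have hV : ∀ t, HasDerivAt (fun s => y s ⬝ᵥ y s) (-2 * (y t ⬝ᵥ L *ᵥ y t)) t := fun t =>
    ((hy t).dotProduct (hy t)).congr_deriv (by rw [dotProduct_comm, dotProduct_neg]; ring)
  have hdecay : ∀ t, 0 ≤ t → y t ⬝ᵥ y t ≤ (y 0 ⬝ᵥ y 0) * exp (-2 * a * t) :=
    fun t => le_mul_exp_of_hasDerivAt_le_mul hV fun s => by linarith [hgap s]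
  refine tendsto_zero_of_dotProduct_self <| squeeze_zero'
    (Eventually.of_forall fun t => dotProduct_self_star_nonneg (y t))
    ((eventually_ge_atTop 0).mono hdecay) ?_
  simpa using (tendsto_exp_neg_atTop_nhds_zero.comp
    (tendsto_id.const_mul_atTop (by linarith : 0 < 2 * a))).const_mul (y 0 ⬝ᵥ y 0)

end

theorem stmt_14_general (N : ℕ) (L : Matrix (Fin N) (Fin N) ℝ)
    (hLsymm : L.IsSymm) (hLpsd : L.PosSemidef)
    (hker : ∀ v : Fin N → ℝ, L.mulVec v = 0 ↔ ∃ c : ℝ, v = fun _ => c)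
    (x : ℝ → Fin N → ℝ)
    (hode : ∀ t, HasDerivAt x (-(L.mulVec (x t))) t) :
    Filter.Tendsto x Filter.atTop
        (nhds (fun _ => (∑ i, x 0 i) / (N : ℝ))) ∧
      ∀ t, ∑ i, x t i = ∑ i, x 0 i := by
  have hconst : ∀ t, ∑ i, x t i = ∑ i, x 0 i := fun t => sum_apply_eq_of_hasDerivAt hode
    (fun s => by simp [L.sum_mulVec_eq_zero hLsymm ((hker 1).2 ⟨1, rfl⟩)]) t 0
  refine ⟨?_, hconst⟩
  set c : Fin N → ℝ := fun _ => (∑ i, x 0 i) / N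
  have hLc : L *ᵥ c = 0 := (hker c).2 ⟨_, rfl⟩
  have hsum : ∀ t, ∑ i, (x t - c) i = 0 := fun t => by
    simp only [c, Pi.sub_apply, Finset.sum_sub_distrib, hconst t, Finset.sum_const,
      Finset.card_univ, Fintype.card_fin, nsmul_eq_mul]
    -- for `N = 0` the division is junk, but then the sum is empty
    exact sub_eq_zero.2 (mul_div_cancel_of_imp' fun h => by
      obtain rfl := Nat.cast_eq_zero.1 h; simp).symm
  have hy : ∀ t, HasDerivAt (fun s => x s - c) (-(L *ᵥ (x t - c))) t := fun t => by
    simpa [mulVec_sub, hLc] using (hode t).sub_const c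
  obtain ⟨a, ha, hgap⟩ := hLpsd.exists_pos_mul_dotProduct_self_le fun v => (hker v).1
  exact tendsto_sub_nhds_zero_iff.1
    (tendsto_zero_of_hasDerivAt_neg_mulVec ha hy fun t => hgap _ (hsum t))

/-- For the Laplacian `L` of an undirected connected graph (symmetric, PSD,
kernel `span 1`), any solution of `ẋ = -L x` converges to the average-consensus vector
`((1/N) Σᵢ xᵢ(0)) 1`, and `1ᵀ x(t)` is constant in time. -/
theorem stmt_14 (N : ℕ) (hN : 0 < N) (L : Matrix (Fin N) (Fin N) ℝ)
    (hLsymm : L.IsSymm) (hLpsd : L.PosSemidef)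
    (hker : ∀ v : Fin N → ℝ, L.mulVec v = 0 ↔ ∃ c : ℝ, v = fun _ => c)
    (x : ℝ → Fin N → ℝ)
    (hode : ∀ t, HasDerivAt x (-(L.mulVec (x t))) t) :
    Filter.Tendsto x Filter.atTop
        (nhds (fun _ => (∑ i, x 0 i) / (N : ℝ))) ∧
      ∀ t, ∑ i, x t i = ∑ i, x 0 i :=
  stmt_14_general N L hLsymm hLpsd hker x hode
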